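/- arXiv:2402.18819 — 4 statements merged into one kernel-verified Lean document; each statement's English description precedes it below -/
import Mathlib

section
/- Let N(z; c, C) denote the density at z of the multivariate normal distribution on ℝ^d with mean c and positive definite covariance matrix C, and N(y; c, s²) the univariate normal density. Then there exists a constant Z > 0, depending on x_1,…,x_{k+1}, y_1,…,y_k and on the parameters but not on (μ, w), such that for all μ, w ∈ ℝ^d: Σ_{m=1}^M π_m · N(μ; μ_m, σ_μ² I) · N(w; w_m, σ_w² I) · Π_{i=1}^{k+1} N(x_i; μ, σ_x² I) · Π_{i=1}^{k} N(y_i; ⟨w, x_i⟩, σ_y²) = Z · Σ_{m=1}^M π̃_m · N(μ; μ̃_m, σ_μ²(1+(k+1)δ_μ)^{−1} I) · N(w; w̃_m, σ_w²(I + kδ_w Σ̄_w)^{−1}). That is, the posterior of the task (μ, w) under the Gaussian-mixture prior and the noisy-linear-regression likelihood is again a Gaussian mixture whose components are re-weighted to π̃_m and re-centered at (μ̃_m, w̃_m). -/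
open MeasureTheory ProbabilityTheory Matrix Filter Topology
open scoped NNReal ENNReal

noncomputable section

namespace ICL

/-- Squared Euclidean norm of a vector, `‖v‖² = vᵀv`. -/
def sqnorm {d : ℕ} (v : Fin d → ℝ) : ℝ := dotProduct v v

/-- Univariate normal density `N(z; c, s²)`. -/
def normalPDF (z c s2 : ℝ) : ℝ :=
  (2 * Real.pi * s2) ^ (-(1 : ℝ) / 2) * Real.exp (-(z - c) ^ 2 / (2 * s2))

/-- Multivariate normal density `N(z; c, C)` on `ℝ^d` with mean `c` and covariance `C`. -/
def mvnPDF {d : ℕ} (z c : Fin d → ℝ) (C : Matrix (Fin d) (Fin d) ℝ) : ℝ :=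
  ((2 * Real.pi) ^ d * C.det) ^ (-(1 : ℝ) / 2) *
    Real.exp (-(dotProduct (z - c) (C⁻¹.mulVec (z - c))) / 2)

/-- `m̄ = (1/(k+1)) Σ_{i=1}^{k+1} x_i`. -/
def mbar {d : ℕ} (k : ℕ) (xs : Fin (k + 1) → Fin d → ℝ) : Fin d → ℝ :=
  ((k : ℝ) + 1)⁻¹ • ∑ i, xs i

/-- `Σ̄_w = (1/k) Σ_{i=1}^k x_i x_iᵀ` (the zero matrix if `k = 0`). -/
def barSigma {d : ℕ} (k : ℕ) (xs : Fin (k + 1) → Fin d → ℝ) : Matrix (Fin d) (Fin d) ℝ :=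
  (k : ℝ)⁻¹ • ∑ i : Fin k, vecMulVec (xs i.castSucc) (xs i.castSucc)

/-- `w̄ = (1/k) Σ_{i=1}^k x_i y_i` (the zero vector if `k = 0`). -/
def wbar {d : ℕ} (k : ℕ) (xs : Fin (k + 1) → Fin d → ℝ) (ys : Fin k → ℝ) : Fin d → ℝ :=
  (k : ℝ)⁻¹ • ∑ i : Fin k, ys i • xs i.castSucc

/-- The matrix `I + k δ_w Σ̄_w`. -/
def Bw {d : ℕ} (σw σy : ℝ) (k : ℕ) (xs : Fin (k + 1) → Fin d → ℝ) :
    Matrix (Fin d) (Fin d) ℝ :=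
  1 + ((k : ℝ) * (σw ^ 2 / σy ^ 2)) • barSigma k xs

/-- Shifted component center `μ̃_m = (1+(k+1)δ_μ)⁻¹ (μ_m + (k+1) δ_μ m̄)`. -/
def muTilde {d : ℕ} (σμ σx : ℝ) (μm : Fin d → ℝ) (k : ℕ)
    (xs : Fin (k + 1) → Fin d → ℝ) : Fin d → ℝ :=
  (1 + ((k : ℝ) + 1) * (σμ ^ 2 / σx ^ 2))⁻¹ •
    (μm + (((k : ℝ) + 1) * (σμ ^ 2 / σx ^ 2)) • mbar k xs)

/-- Shifted component center `w̃_m = (I + k δ_w Σ̄_w)⁻¹ (w_m + k δ_w w̄)`. -/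
def wTilde {d : ℕ} (σw σy : ℝ) (wm : Fin d → ℝ) (k : ℕ)
    (xs : Fin (k + 1) → Fin d → ℝ) (ys : Fin k → ℝ) : Fin d → ℝ :=
  (Bw σw σy k xs)⁻¹.mulVec (wm + ((k : ℝ) * (σw ^ 2 / σy ^ 2)) • wbar k xs ys)

/-- Re-weighting factor `c^μ_m`. -/
def cMu {d : ℕ} (σμ σx : ℝ) (μm : Fin d → ℝ) (k : ℕ)
    (xs : Fin (k + 1) → Fin d → ℝ) : ℝ :=
  Real.exp (-(sqnorm μm -
      (1 + ((k : ℝ) + 1) * (σμ ^ 2 / σx ^ 2))⁻¹ *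
        sqnorm (μm + (((k : ℝ) + 1) * (σμ ^ 2 / σx ^ 2)) • mbar k xs)) / (2 * σμ ^ 2))

/-- Re-weighting factor `c^w_m`. -/
def cW {d : ℕ} (σw σy : ℝ) (wm : Fin d → ℝ) (k : ℕ)
    (xs : Fin (k + 1) → Fin d → ℝ) (ys : Fin k → ℝ) : ℝ :=
  Real.exp (-(sqnorm wm -
      dotProduct (wm + ((k : ℝ) * (σw ^ 2 / σy ^ 2)) • wbar k xs ys)
        ((Bw σw σy k xs)⁻¹.mulVec
          (wm + ((k : ℝ) * (σw ^ 2 / σy ^ 2)) • wbar k xs ys))) / (2 * σw ^ 2))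

/-- Posterior mixture weight `π̃_m`. -/
def piTilde {d M : ℕ} (πc : Fin M → ℝ) (μc wc : Fin M → Fin d → ℝ)
    (σμ σw σx σy : ℝ) (k : ℕ) (xs : Fin (k + 1) → Fin d → ℝ) (ys : Fin k → ℝ)
    (m : Fin M) : ℝ :=
  πc m * cMu σμ σx (μc m) k xs * cW σw σy (wc m) k xs ys /
    ∑ l, πc l * cMu σμ σx (μc l) k xs * cW σw σy (wc l) k xs ys

/-- The Bayes-optimal in-context prediction `F*_k = ⟨x_{k+1}, Σ_m π̃_m w̃_m⟩`. -/
def Fstar {d M : ℕ} (πc : Fin M → ℝ) (μc wc : Fin M → Fin d → ℝ)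
    (σμ σw σx σy : ℝ) (k : ℕ) (xs : Fin (k + 1) → Fin d → ℝ) (ys : Fin k → ℝ) : ℝ :=
  dotProduct (xs (Fin.last k))
    (∑ m, piTilde πc μc wc σμ σw σx σy k xs ys m • wTilde σw σy (wc m) k xs ys)

/-- The isotropic Gaussian measure `N(c, v·I)` on `ℝ^d`, as a product of
univariate Gaussians. -/
def gaussianVec (d : ℕ) (c : Fin d → ℝ) (v : ℝ≥0) : Measure (Fin d → ℝ) :=
  Measure.pi fun i => gaussianReal (c i) v

instance (d : ℕ) (c : Fin d → ℝ) (v : ℝ≥0) : IsProbabilityMeasure (gaussianVec d c v) := by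
  unfold gaussianVec; infer_instance

/-- The law of `K` i.i.d. samples from `N(c, v·I)`. -/
def samples (d K : ℕ) (c : Fin d → ℝ) (v : ℝ≥0) : Measure (Fin K → Fin d → ℝ) :=
  Measure.pi fun _ => gaussianVec d c v

instance (d K : ℕ) (c : Fin d → ℝ) (v : ℝ≥0) : IsProbabilityMeasure (samples d K c v) := by
  unfold samples; infer_instance

/-- Largest eigenvalue of a (symmetric) matrix, as the supremum of its eigenvalues. -/
def maxEigenvalue {d : ℕ} (A : Matrix (Fin d) (Fin d) ℝ) : ℝ :=
  sSup {t : ℝ | Module.End.HasEigenvalue (Matrix.toLin' A) t}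

end ICL

open ICL

/-!
For a fixed component `m`, prior times likelihood is the exponential of a quadratic form that
splits into a part in `μ` and a part in `w`. In the prior's scale the likelihood contributes the
extra precision `(k+1)δ_μ I` to `μ` and `kδ_w Σ̄_w` to `w`; completing the square then turns the
component into `c^μ_m c^w_m` times the two stated Gaussian densities, up to a factor that depends
neither on `m` nor on `(μ, w)`. Normalising the weights `π_m c^μ_m c^w_m` gives `π̃_m`, and the
normalising sum goes into `Z`.
-/

namespace Matrix

variable {n R : Type*} [Fintype n] [DecidableEq n]

theorem IsSymm.complete_square [CommRing R] {B : Matrix n n R} (hB : B.IsSymm)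
    (hdet : IsUnit B.det) (u w : n → R) :
    (w - B⁻¹ *ᵥ u) ⬝ᵥ B *ᵥ (w - B⁻¹ *ᵥ u) = w ⬝ᵥ B *ᵥ w - 2 * (w ⬝ᵥ u) + u ⬝ᵥ B⁻¹ *ᵥ u := by
  have hBv : B *ᵥ (B⁻¹ *ᵥ u) = u := by rw [mulVec_mulVec, mul_nonsing_inv _ hdet, one_mulVec]
  have hsymm : B⁻¹ *ᵥ u ⬝ᵥ B *ᵥ w = w ⬝ᵥ u := by
    rw [dotProduct_mulVec, ← mulVec_transpose, hB.eq, hBv, dotProduct_comm]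
  rw [mulVec_sub, hBv, dotProduct_sub, sub_dotProduct, sub_dotProduct, hsymm,
    dotProduct_comm (B⁻¹ *ᵥ u) u]
  ring

theorem inv_one_add_smul_one [Field R] {c : R} (hc : 1 + c ≠ 0) :
    (1 + c • 1 : Matrix n n R)⁻¹ = (1 + c)⁻¹ • 1 := by
  rw [show (1 + c • 1 : Matrix n n R) = (1 + c) • 1 by rw [add_smul, one_smul]]
  refine inv_eq_right_inv ?_
  rw [Matrix.smul_mul, Matrix.mul_smul, Matrix.mul_one, smul_smul, mul_inv_cancel₀ hc, one_smul]

end Matrix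

theorem prod_const_mul_exp {ι : Type*} [Fintype ι] (K : ℝ) (f : ι → ℝ) :
    ∏ i, K * Real.exp (f i) = K ^ Fintype.card ι * Real.exp (∑ i, f i) := by
  rw [Finset.prod_mul_distrib, Finset.prod_const, Finset.card_univ, Real.exp_sum]

-- At `k = 0` the junk value `0⁻¹ = 0` is harmless: the sum is empty.
theorem natCast_mul_smul_inv_smul_sum {K V : Type*} [Field K] [CharZero K] [AddCommGroup V]
    [Module K V] (k : ℕ) (a : K) (f : Fin k → V) :
    ((k : K) * a) • ((k : K)⁻¹ • ∑ i, f i) = a • ∑ i, f i := by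
  rcases Nat.eq_zero_or_pos k with rfl | hk
  · simp
  · rw [smul_smul, mul_right_comm, mul_inv_cancel₀ (Nat.cast_ne_zero.mpr hk.ne'), one_mul]

namespace ICL

theorem mvnPDF_smul_inv {d : ℕ} (z c : Fin d → ℝ) {s : ℝ} (hs : s ≠ 0)
    {B : Matrix (Fin d) (Fin d) ℝ} (hB : IsUnit B.det) :
    mvnPDF z c (s • B⁻¹) = ((2 * Real.pi) ^ d * (s • B⁻¹).det) ^ (-(1 : ℝ) / 2) *
      Real.exp (-((z - c) ⬝ᵥ B *ᵥ (z - c)) / (2 * s)) := by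
  have hinv : (s • B⁻¹)⁻¹ = s⁻¹ • B := by
    refine Matrix.inv_eq_right_inv ?_
    rw [Matrix.smul_mul, Matrix.mul_smul, Matrix.nonsing_inv_mul _ hB, smul_smul,
      mul_inv_cancel₀ hs, one_smul]
  rw [mvnPDF, hinv, Matrix.smul_mulVec, dotProduct_smul, smul_eq_mul]
  field_simp

theorem mvnPDF_smul_one {d : ℕ} (z c : Fin d → ℝ) {s : ℝ} (hs : s ≠ 0) :
    mvnPDF z c (s • 1) = ((2 * Real.pi) ^ d * s ^ d) ^ (-(1 : ℝ) / 2) *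
      Real.exp (-sqnorm (z - c) / (2 * s)) := by
  simpa [Matrix.det_smul, sqnorm] using mvnPDF_smul_inv z c hs (B := 1) (by simp)

theorem exists_pos_mvnPDF_mul_exp_eq {d : ℕ} {s : ℝ} (hs : 0 < s)
    {A : Matrix (Fin d) (Fin d) ℝ} (hA : (1 + A).PosDef) (b : Fin d → ℝ) :
    ∃ C, 0 < C ∧ ∀ a w : Fin d → ℝ,
      mvnPDF w a (s • 1) * Real.exp (-(w ⬝ᵥ A *ᵥ w - 2 * (w ⬝ᵥ b)) / (2 * s)) =
        C * Real.exp (-(sqnorm a - (a + b) ⬝ᵥ (1 + A)⁻¹ *ᵥ (a + b)) / (2 * s)) *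
          mvnPDF w ((1 + A)⁻¹ *ᵥ (a + b)) (s • (1 + A)⁻¹) := by
  set B := 1 + A with hB
  have hdet : IsUnit B.det := hA.isUnit.map Matrix.detMonoidHom
  set N₁ := ((2 * Real.pi) ^ d * s ^ d) ^ (-(1 : ℝ) / 2)
  set N₂ := ((2 * Real.pi) ^ d * (s • B⁻¹).det) ^ (-(1 : ℝ) / 2)
  have hN₂ : 0 < N₂ := Real.rpow_pos_of_pos (by have := (hA.inv.smul hs).det_pos; positivity) _
  refine ⟨N₁ / N₂, by positivity, fun a w => ?_⟩
  have hexp : sqnorm (w - a) + (w ⬝ᵥ A *ᵥ w - 2 * (w ⬝ᵥ b)) =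
      (sqnorm a - (a + b) ⬝ᵥ B⁻¹ *ᵥ (a + b)) +
        (w - B⁻¹ *ᵥ (a + b)) ⬝ᵥ B *ᵥ (w - B⁻¹ *ᵥ (a + b)) := by
    have hsymm : B.IsSymm := Matrix.isHermitian_iff_isSymm.mp hA.isHermitian
    rw [hsymm.complete_square hdet, hB, Matrix.add_mulVec, Matrix.one_mulVec]
    simp only [sqnorm, dotProduct_add, sub_dotProduct, dotProduct_sub, dotProduct_comm a w]
    ring
  rw [mvnPDF_smul_one w a hs.ne', mvnPDF_smul_inv w _ hs.ne' hdet, mul_assoc, ← Real.exp_add,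
    ← add_div, ← neg_add, hexp, neg_add, add_div, Real.exp_add]
  change N₁ * (_ * _) = N₁ / N₂ * _ * (N₂ * _)
  field_simp

theorem sum_sqnorm_sub_div {d k : ℕ} {σμ σx : ℝ} (hσμ : σμ ≠ 0) (hσx : σx ≠ 0)
    (xs : Fin (k + 1) → Fin d → ℝ) (μ : Fin d → ℝ) :
    (∑ i, sqnorm (xs i - μ)) / σx ^ 2 = (∑ i, sqnorm (xs i)) / σx ^ 2 +
      (μ ⬝ᵥ ((((k : ℝ) + 1) * (σμ ^ 2 / σx ^ 2)) • 1 : Matrix (Fin d) (Fin d) ℝ) *ᵥ μ -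
        2 * (μ ⬝ᵥ (((k : ℝ) + 1) * (σμ ^ 2 / σx ^ 2)) • mbar k xs)) / σμ ^ 2 := by
  have hsum : ∑ i, sqnorm (xs i - μ) =
      ∑ i, sqnorm (xs i) - 2 * (μ ⬝ᵥ ∑ i, xs i) + ((k : ℝ) + 1) * (μ ⬝ᵥ μ) := by
    simp only [sqnorm, sub_dotProduct, dotProduct_sub, Finset.sum_sub_distrib,
      dotProduct_comm μ, sum_dotProduct, Finset.sum_const, Finset.card_univ, Fintype.card_fin,
      nsmul_eq_mul, Nat.cast_add, Nat.cast_one]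
    ring
  have hk : (k : ℝ) + 1 ≠ 0 := by positivity
  rw [hsum, Matrix.smul_mulVec, Matrix.one_mulVec, mbar, smul_smul, dotProduct_smul,
    dotProduct_smul, smul_eq_mul, smul_eq_mul]
  field_simp
  ring

theorem sum_sq_sub_dotProduct_div {d k : ℕ} {σw σy : ℝ} (hσw : σw ≠ 0) (hσy : σy ≠ 0)
    (xs : Fin (k + 1) → Fin d → ℝ) (ys : Fin k → ℝ) (w : Fin d → ℝ) :
    (∑ i, (ys i - w ⬝ᵥ xs i.castSucc) ^ 2) / σy ^ 2 = (∑ i, ys i ^ 2) / σy ^ 2 +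
      (w ⬝ᵥ (((k : ℝ) * (σw ^ 2 / σy ^ 2)) • barSigma k xs) *ᵥ w -
        2 * (w ⬝ᵥ ((k : ℝ) * (σw ^ 2 / σy ^ 2)) • wbar k xs ys)) / σw ^ 2 := by
  rw [barSigma, wbar, natCast_mul_smul_inv_smul_sum, natCast_mul_smul_inv_smul_sum,
    Matrix.smul_mulVec, Matrix.sum_mulVec]
  simp only [Matrix.vecMulVec_mulVec, op_smul_eq_smul, dotProduct_smul, dotProduct_sum,
    smul_eq_mul, dotProduct_comm _ w, sub_sq, Finset.sum_add_distrib, Finset.sum_sub_distrib]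
  field_simp
  simp only [mul_assoc, ← Finset.mul_sum]
  ring

theorem posDef_Bw {d k : ℕ} (σw σy : ℝ) (xs : Fin (k + 1) → Fin d → ℝ) :
    (Bw σw σy k xs).PosDef := by
  rw [Bw, barSigma, natCast_mul_smul_inv_smul_sum]
  exact Matrix.PosDef.one.add_posSemidef ((Matrix.posSemidef_sum _ fun i _ =>
    Matrix.posSemidef_vecMulVec_self_star (xs i.castSucc)).smul (by positivity))

theorem exists_pos_mvnPDF_mul_prod_mvnPDF_eq {d k : ℕ} {σμ σx : ℝ} (hσμ : 0 < σμ)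
    (hσx : 0 < σx) (xs : Fin (k + 1) → Fin d → ℝ) :
    ∃ C, 0 < C ∧ ∀ μm μ : Fin d → ℝ,
      mvnPDF μ μm (σμ ^ 2 • 1) * ∏ i, mvnPDF (xs i) μ (σx ^ 2 • 1) =
        C * cMu σμ σx μm k xs * mvnPDF μ (muTilde σμ σx μm k xs)
          ((σμ ^ 2 * (1 + ((k : ℝ) + 1) * (σμ ^ 2 / σx ^ 2))⁻¹) • 1) := by
  set c := ((k : ℝ) + 1) * (σμ ^ 2 / σx ^ 2) with hc_def
  have hc : 0 < c := by positivity
  have hpd : (1 + c • 1 : Matrix (Fin d) (Fin d) ℝ).PosDef :=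
    Matrix.PosDef.one.add_posSemidef (Matrix.PosSemidef.one.smul hc.le)
  obtain ⟨C, hC, hconj⟩ :=
    exists_pos_mvnPDF_mul_exp_eq (s := σμ ^ 2) (by positivity) hpd (c • mbar k xs)
  set K := ((2 * Real.pi) ^ d * (σx ^ 2) ^ d) ^ (-(1 : ℝ) / 2)
  set E := Real.exp (-(∑ i, sqnorm (xs i)) / (2 * σx ^ 2))
  refine ⟨K ^ (k + 1) * E * C, by positivity, fun μm μ => ?_⟩
  have hlik : ∏ i, mvnPDF (xs i) μ (σx ^ 2 • 1) = K ^ (k + 1) * E *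
      Real.exp (-(μ ⬝ᵥ (c • 1 : Matrix (Fin d) (Fin d) ℝ) *ᵥ μ - 2 * (μ ⬝ᵥ c • mbar k xs)) /
        (2 * σμ ^ 2)) := by
    simp only [mvnPDF_smul_one _ _ (pow_ne_zero 2 hσx.ne'), prod_const_mul_exp,
      Fintype.card_fin, E, mul_assoc, ← Real.exp_add]
    have h := sum_sqnorm_sub_div hσμ.ne' hσx.ne' xs μ
    rw [← hc_def] at h
    congr 2
    rw [← Finset.sum_div, Finset.sum_neg_distrib]
    linear_combination (-1 / 2 : ℝ) * h
  rw [hlik, mul_left_comm, hconj, Matrix.inv_one_add_smul_one (by positivity),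
    Matrix.smul_mulVec, Matrix.one_mulVec, smul_smul, dotProduct_smul, smul_eq_mul, cMu, muTilde,
    ← hc_def]
  simp only [sqnorm]
  ring

theorem exists_pos_mvnPDF_mul_prod_normalPDF_eq {d k : ℕ} {σw σy : ℝ} (hσw : 0 < σw)
    (hσy : 0 < σy) (xs : Fin (k + 1) → Fin d → ℝ) (ys : Fin k → ℝ) :
    ∃ C, 0 < C ∧ ∀ wm w : Fin d → ℝ,
      mvnPDF w wm (σw ^ 2 • 1) * ∏ i, normalPDF (ys i) (w ⬝ᵥ xs i.castSucc) (σy ^ 2) =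
        C * cW σw σy wm k xs ys * mvnPDF w (wTilde σw σy wm k xs ys)
          (σw ^ 2 • (Bw σw σy k xs)⁻¹) := by
  set A := ((k : ℝ) * (σw ^ 2 / σy ^ 2)) • barSigma k xs
  set b := ((k : ℝ) * (σw ^ 2 / σy ^ 2)) • wbar k xs ys
  obtain ⟨C, hC, hconj⟩ :=
    exists_pos_mvnPDF_mul_exp_eq (s := σw ^ 2) (by positivity) (posDef_Bw σw σy xs) b
  set K := (2 * Real.pi * σy ^ 2) ^ (-(1 : ℝ) / 2)
  set E := Real.exp (-(∑ i, ys i ^ 2) / (2 * σy ^ 2))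
  refine ⟨K ^ k * E * C, by positivity, fun wm w => ?_⟩
  have hlik : ∏ i, normalPDF (ys i) (w ⬝ᵥ xs i.castSucc) (σy ^ 2) =
      K ^ k * E * Real.exp (-(w ⬝ᵥ A *ᵥ w - 2 * (w ⬝ᵥ b)) / (2 * σw ^ 2)) := by
    simp only [normalPDF, prod_const_mul_exp, Fintype.card_fin, E]
    rw [mul_assoc (K ^ k), ← Real.exp_add]
    congr 2
    rw [← Finset.sum_div, Finset.sum_neg_distrib]
    linear_combination (-1 / 2 : ℝ) * sum_sq_sub_dotProduct_div hσw.ne' hσy.ne' xs ys w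
  rw [hlik, mul_left_comm, hconj, cW, wTilde, Bw]
  ring

end ICL

theorem posterior_is_gaussian_mixture_general
    (d M k : ℕ) (hM : 0 < M)
    (μc wc : Fin M → Fin d → ℝ) (πc : Fin M → ℝ)
    (hπ : ∀ m, πc m ∈ Set.Ioo (0 : ℝ) 1)
    (σμ σw σx σy : ℝ) (hσμ : 0 < σμ) (hσw : 0 < σw) (hσx : 0 < σx) (hσy : 0 < σy)
    (xs : Fin (k + 1) → Fin d → ℝ) (ys : Fin k → ℝ) :
    ∃ Z : ℝ, 0 < Z ∧ ∀ μ w : Fin d → ℝ,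
      (∑ m, πc m * mvnPDF μ (μc m) (σμ ^ 2 • 1) * mvnPDF w (wc m) (σw ^ 2 • 1) *
          (∏ i : Fin (k + 1), mvnPDF (xs i) μ (σx ^ 2 • 1)) *
          (∏ i : Fin k, normalPDF (ys i) (dotProduct w (xs i.castSucc)) (σy ^ 2)))
      = Z * ∑ m, piTilde πc μc wc σμ σw σx σy k xs ys m *
          mvnPDF μ (muTilde σμ σx (μc m) k xs)
            ((σμ ^ 2 * (1 + ((k : ℝ) + 1) * (σμ ^ 2 / σx ^ 2))⁻¹) • 1) *
          mvnPDF w (wTilde σw σy (wc m) k xs ys)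
            (σw ^ 2 • (Bw σw σy k xs)⁻¹) := by
  obtain ⟨Cμ, hCμ, hμ⟩ := exists_pos_mvnPDF_mul_prod_mvnPDF_eq hσμ hσx xs
  obtain ⟨Cw, hCw, hw⟩ := exists_pos_mvnPDF_mul_prod_normalPDF_eq hσw hσy xs ys
  set S := ∑ l, πc l * cMu σμ σx (μc l) k xs * cW σw σy (wc l) k xs ys with hS_def
  have hS : 0 < S := Finset.sum_pos (fun l _ => by have := (hπ l).1; unfold cMu cW; positivity)
    ⟨⟨0, hM⟩, Finset.mem_univ _⟩
  refine ⟨Cμ * Cw * S, by positivity, fun μ w => ?_⟩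
  rw [Finset.mul_sum]
  refine Finset.sum_congr rfl fun m _ => ?_
  rw [show ∀ a b c e f : ℝ, a * b * c * e * f = a * (b * e) * (c * f) from
    fun _ _ _ _ _ => by ring, hμ, hw, piTilde, ← hS_def]
  field_simp

/-- Conjugacy: the posterior of the task `(μ, w)` under the
Gaussian-mixture prior and the noisy-linear-regression likelihood is again a
Gaussian mixture, with components re-weighted to `π̃_m` and re-centered at
`(μ̃_m, w̃_m)`. -/
theorem posterior_is_gaussian_mixture
    (d M k : ℕ) (hd : 0 < d) (hM : 0 < M)
    (μc wc : Fin M → Fin d → ℝ) (πc : Fin M → ℝ)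
    (hπ : ∀ m, πc m ∈ Set.Ioo (0 : ℝ) 1) (hπs : ∑ m, πc m = 1)
    (σμ σw σx σy : ℝ) (hσμ : 0 < σμ) (hσw : 0 < σw) (hσx : 0 < σx) (hσy : 0 < σy)
    (xs : Fin (k + 1) → Fin d → ℝ) (ys : Fin k → ℝ) :
    ∃ Z : ℝ, 0 < Z ∧ ∀ μ w : Fin d → ℝ,
      (∑ m, πc m * mvnPDF μ (μc m) (σμ ^ 2 • 1) * mvnPDF w (wc m) (σw ^ 2 • 1) *
          (∏ i : Fin (k + 1), mvnPDF (xs i) μ (σx ^ 2 • 1)) *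
          (∏ i : Fin k, normalPDF (ys i) (dotProduct w (xs i.castSucc)) (σy ^ 2)))
      = Z * ∑ m, piTilde πc μc wc σμ σw σx σy k xs ys m *
          mvnPDF μ (muTilde σμ σx (μc m) k xs)
            ((σμ ^ 2 * (1 + ((k : ℝ) + 1) * (σμ ^ 2 / σx ^ 2))⁻¹) • 1) *
          mvnPDF w (wTilde σw σy (wc m) k xs ys)
            (σw ^ 2 • (Bw σw σy k xs)⁻¹) :=
  posterior_is_gaussian_mixture_general d M k hM μc wc πc hπ σμ σw σx σy hσμ hσw hσx hσy xs ys
end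
end

section
/- (Closed form of the w-part of the component re-weighting ratio.) Let α, β ∈ {1,…,M} and suppose the labels are noiseless linear: y_i = ⟨x_i, w*⟩ for all i = 1,…,k, for some w* ∈ ℝ^d. Then log(c^w_α / c^w_β) = (‖w_β − w*‖²_{I − (I + kδ_w Σ̄_w)^{−1}} − ‖w_α − w*‖²_{I − (I + kδ_w Σ̄_w)^{−1}}) / (2σ_w²). -/
/-! With `B = I + k δ_w Σ̄_w`, noiseless labels give `k δ_w w̄ = (B - I) w*`, so the vector in
the exponent of `c^w_m` is `(w_m - w*) + B w*`. Completing the square against the symmetric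
matrix `B⁻¹` splits the exponent into `‖w_m - w*‖²_{I - B⁻¹}` plus `‖w*‖² - ‖w*‖²_B`; the latter
does not depend on the component and cancels in the log-ratio. -/

open MeasureTheory ProbabilityTheory Matrix Filter Topology
open scoped NNReal ENNReal

noncomputable section

open ICL

namespace ICL

theorem dotProduct_self_sub_inv_quadForm_add_mulVec {n : Type*} [Fintype n] [DecidableEq n]
    {B : Matrix n n ℝ} (hB : B.IsSymm) (hdet : IsUnit B.det) (w v : n → ℝ) :
    w ⬝ᵥ w - (w + (B - 1) *ᵥ v) ⬝ᵥ (B⁻¹ *ᵥ (w + (B - 1) *ᵥ v)) =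
      (w - v) ⬝ᵥ ((1 - B⁻¹) *ᵥ (w - v)) + (v ⬝ᵥ v - v ⬝ᵥ (B *ᵥ v)) := by
  obtain ⟨u, rfl⟩ : ∃ u, w = u + v := ⟨w - v, (sub_add_cancel w v).symm⟩
  have hshift : u + v + (B - 1) *ᵥ v = u + B *ᵥ v := by
    rw [sub_mulVec, one_mulVec]; abel
  have hinv : B⁻¹ *ᵥ (B *ᵥ v) = v := by
    rw [mulVec_mulVec, nonsing_inv_mul _ hdet, one_mulVec]
  have hcross : (B *ᵥ v) ⬝ᵥ (B⁻¹ *ᵥ u) = v ⬝ᵥ u := by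
    rw [← vecMul_transpose, hB.eq, ← dotProduct_mulVec, mulVec_mulVec, mul_nonsing_inv _ hdet,
      one_mulVec]
  rw [hshift, add_sub_cancel_right]
  simp only [mulVec_add, sub_mulVec, one_mulVec, hinv, dotProduct_add, add_dotProduct,
    dotProduct_sub, hcross]
  rw [dotProduct_comm v u, dotProduct_comm (B *ᵥ v) v]
  ring

theorem barSigma_posSemidef {d : ℕ} (k : ℕ) (xs : Fin (k + 1) → Fin d → ℝ) :
    (barSigma k xs).PosSemidef :=
  (posSemidef_sum _ fun i _ => posSemidef_vecMulVec_self_star (xs i.castSucc)).smul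
    (inv_nonneg.2 k.cast_nonneg)

theorem Bw_posDef {d : ℕ} (σw σy : ℝ) (k : ℕ) (xs : Fin (k + 1) → Fin d → ℝ) :
    (Bw σw σy k xs).PosDef :=
  PosDef.one.add_posSemidef ((barSigma_posSemidef k xs).smul (by positivity))

theorem wbar_eq_barSigma_mulVec {d : ℕ} (k : ℕ) (xs : Fin (k + 1) → Fin d → ℝ)
    (ys : Fin k → ℝ) (wstar : Fin d → ℝ)
    (hys : ∀ i : Fin k, ys i = xs i.castSucc ⬝ᵥ wstar) :
    wbar k xs ys = barSigma k xs *ᵥ wstar := by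
  simp only [wbar, barSigma, smul_mulVec, sum_mulVec, vecMulVec_mulVec, op_smul_eq_smul, hys]

theorem cW_eq_exp_of_noiseless {d : ℕ} (σw σy : ℝ) (wm : Fin d → ℝ) (k : ℕ)
    (xs : Fin (k + 1) → Fin d → ℝ) (ys : Fin k → ℝ) (wstar : Fin d → ℝ)
    (hys : ∀ i : Fin k, ys i = xs i.castSucc ⬝ᵥ wstar) :
    cW σw σy wm k xs ys =
      Real.exp (-((wm - wstar) ⬝ᵥ ((1 - (Bw σw σy k xs)⁻¹) *ᵥ (wm - wstar)) +
        (wstar ⬝ᵥ wstar - wstar ⬝ᵥ (Bw σw σy k xs *ᵥ wstar))) / (2 * σw ^ 2)) := by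
  have hB := Bw_posDef σw σy k xs
  have hshift :
      ((k : ℝ) * (σw ^ 2 / σy ^ 2)) • wbar k xs ys = (Bw σw σy k xs - 1) *ᵥ wstar := by
    rw [wbar_eq_barSigma_mulVec k xs ys wstar hys, ← smul_mulVec, Bw, add_sub_cancel_left]
  rw [cW, sqnorm, hshift, dotProduct_self_sub_inv_quadForm_add_mulVec
    (isHermitian_iff_isSymm.1 hB.isHermitian) hB.det_pos.ne'.isUnit]

end ICL

theorem psi_w_closed_form_general
    (d M k : ℕ)
    (wc : Fin M → Fin d → ℝ)
    (σw σy : ℝ)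
    (xs : Fin (k + 1) → Fin d → ℝ) (ys : Fin k → ℝ) (wstar : Fin d → ℝ)
    (hys : ∀ i : Fin k, ys i = dotProduct (xs i.castSucc) wstar)
    (α β : Fin M) :
    Real.log (cW σw σy (wc α) k xs ys / cW σw σy (wc β) k xs ys) =
      (dotProduct (wc β - wstar) ((1 - (Bw σw σy k xs)⁻¹).mulVec (wc β - wstar)) -
        dotProduct (wc α - wstar) ((1 - (Bw σw σy k xs)⁻¹).mulVec (wc α - wstar))) /
      (2 * σw ^ 2) := by
  rw [cW_eq_exp_of_noiseless σw σy _ k xs ys wstar hys,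
    cW_eq_exp_of_noiseless σw σy _ k xs ys wstar hys, ← Real.exp_sub, Real.log_exp]
  ring

/-- (Closed form of the w-part of the component re-weighting
ratio), under noiseless linear labels `y_i = ⟨x_i, w*⟩`. -/
theorem psi_w_closed_form
    (d M k : ℕ) (hd : 0 < d) (hM : 0 < M)
    (wc : Fin M → Fin d → ℝ)
    (σw σy : ℝ) (hσw : 0 < σw) (hσy : 0 < σy)
    (xs : Fin (k + 1) → Fin d → ℝ) (ys : Fin k → ℝ) (wstar : Fin d → ℝ)
    (hys : ∀ i : Fin k, ys i = dotProduct (xs i.castSucc) wstar)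
    (α β : Fin M) :
    Real.log (cW σw σy (wc α) k xs ys / cW σw σy (wc β) k xs ys) =
      (dotProduct (wc β - wstar) ((1 - (Bw σw σy k xs)⁻¹).mulVec (wc β - wstar)) -
        dotProduct (wc α - wstar) ((1 - (Bw σw σy k xs)⁻¹).mulVec (wc α - wstar))) /
      (2 * σw ^ 2) :=
  psi_w_closed_form_general d M k wc σw σy xs ys wstar hys α β
end
end

section
/- (Almost-sure limit of the μ-part of the re-weighting ratio.) Let α, β ∈ {1,…,M} with ‖μ_α‖ = ‖μ_β‖, and let x_1, x_2, … be i.i.d. N(μ*, τ_x² I_d) random vectors with τ_x > 0. For each k ≥ 0 let Ψ^{(k)}_μ(α,β) = log(c^μ_α / c^μ_β) computed from x_1,…,x_{k+1}. Then almost surely lim_{k→∞} Ψ^{(k)}_μ(α,β) = (‖μ_β − μ*‖² − ‖μ_α − μ*‖²)/(2σ_μ²). -/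
open MeasureTheory ProbabilityTheory Matrix Filter Topology
open scoped NNReal ENNReal

noncomputable section

open ICL

/-!
The exponent of `c^μ_m` depends on the data only through `m̄`, and when `‖μ_α‖ = ‖μ_β‖` the
quadratic terms in `m̄` cancel in the ratio, leaving
`Ψ^{(k)}_μ(α,β) = t_k/(1+t_k) · ⟪μ_α - μ_β, m̄⟫ / σ_μ²` with `t_k = (k+1)δ_μ → ∞`.
By the strong law of large numbers `m̄ → μ*` almost surely, and expanding
`‖μ_β - μ*‖² - ‖μ_α - μ*‖²` with `‖μ_α‖ = ‖μ_β‖` identifies the limit.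
-/

namespace ICL

lemma sqnorm_add_smul {d : ℕ} (u w : Fin d → ℝ) (c : ℝ) :
    sqnorm (u + c • w) = sqnorm u + 2 * c * u ⬝ᵥ w + c ^ 2 * sqnorm w := by
  simp only [sqnorm, add_dotProduct, dotProduct_add, smul_dotProduct, dotProduct_smul,
    smul_eq_mul, dotProduct_comm w u]
  ring

lemma sqnorm_sub {d : ℕ} (u w : Fin d → ℝ) :
    sqnorm (u - w) = sqnorm u - 2 * u ⬝ᵥ w + sqnorm w := by
  simp only [sqnorm, sub_dotProduct, dotProduct_sub, dotProduct_comm w u]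
  ring

lemma sqnorm_sub_sub_sqnorm_sub_of_sqnorm_eq {d : ℕ} {a b : Fin d → ℝ}
    (hab : sqnorm a = sqnorm b) (c : Fin d → ℝ) :
    sqnorm (b - c) - sqnorm (a - c) = 2 * (a - b) ⬝ᵥ c := by
  rw [sqnorm_sub, sqnorm_sub, hab, sub_dotProduct]
  ring

lemma log_cMu_div_cMu {d : ℕ} {σμ : ℝ} (σx : ℝ) (hσμ : σμ ≠ 0) {μa μb : Fin d → ℝ}
    (hnorm : sqnorm μa = sqnorm μb) (k : ℕ) (xs : Fin (k + 1) → Fin d → ℝ)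
    (ht : 1 + ((k : ℝ) + 1) * (σμ ^ 2 / σx ^ 2) ≠ 0) :
    Real.log (cMu σμ σx μa k xs / cMu σμ σx μb k xs) =
      ((k : ℝ) + 1) * (σμ ^ 2 / σx ^ 2) / (1 + ((k : ℝ) + 1) * (σμ ^ 2 / σx ^ 2)) *
        (μa - μb) ⬝ᵥ mbar k xs / σμ ^ 2 := by
  unfold cMu
  rw [← Real.exp_sub, Real.log_exp, sqnorm_add_smul, sqnorm_add_smul, hnorm, sub_dotProduct]
  generalize σμ ^ 2 / σx ^ 2 = δ at ht ⊢
  field_simp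
  ring

lemma tendsto_mul_div_one_add_mul {δ : ℝ} (hδ : δ ≠ 0) :
    Tendsto (fun k : ℕ => ((k : ℝ) + 1) * δ / (1 + ((k : ℝ) + 1) * δ)) atTop (𝓝 1) := by
  have h := tendsto_add_mul_div_add_mul_atTop_nhds δ (1 + δ) δ hδ
  rw [div_self hδ] at h
  exact h.congr fun k => by ring_nf

lemma integrable_id_gaussianVec (d : ℕ) (c : Fin d → ℝ) (v : ℝ≥0) :
    Integrable id (gaussianVec d c v) :=
  Integrable.of_eval fun _ =>
    integrable_eval (memLp_one_iff_integrable.mp (memLp_id_gaussianReal 1))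

lemma integral_id_gaussianVec (d : ℕ) (c : Fin d → ℝ) (v : ℝ≥0) :
    ∫ x, x ∂gaussianVec d c v = c := by
  ext j
  rw [eval_integral (f := fun x => x) (integrable_pi_iff.mp (integrable_id_gaussianVec d c v)),
    gaussianVec]
  exact integral_eval.trans integral_id_gaussianReal

lemma mbar_eq_smul_sum_range {d : ℕ} (x : ℕ → Fin d → ℝ) (k : ℕ) :
    mbar k (fun i : Fin (k + 1) => x i) =
      ((k + 1 : ℕ) : ℝ)⁻¹ • ∑ i ∈ Finset.range (k + 1), x i := by
  rw [mbar, Fin.sum_univ_eq_sum_range (fun i => x i), Nat.cast_succ]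

lemma ae_tendsto_mbar {Ω : Type*} [MeasurableSpace Ω] {P : Measure Ω} {d : ℕ}
    {ν : Measure (Fin d → ℝ)} (X : ℕ → Ω → Fin d → ℝ) (hXmeas : ∀ i, AEMeasurable (X i) P)
    (hXindep : Pairwise fun i j => X i ⟂ᵢ[P] X j) (hXdist : ∀ i, P.map (X i) = ν)
    (hν : Integrable id ν) :
    ∀ᵐ ω ∂P, Tendsto (fun k => mbar k (fun i : Fin (k + 1) => X i ω)) atTop
      (𝓝 (∫ x, x ∂ν)) := by
  have hident : ∀ i, IdentDistrib (X i) (X 0) P P := fun i =>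
    ⟨hXmeas i, hXmeas 0, by rw [hXdist, hXdist]⟩
  have hint : Integrable (X 0) P := by
    rw [← hXdist 0] at hν
    exact (integrable_map_measure hν.aestronglyMeasurable (hXmeas 0)).mp hν
  have hmean : ∫ ω, X 0 ω ∂P = ∫ x, x ∂ν := by
    rw [← hXdist 0]
    exact (integral_map (hXmeas 0) aestronglyMeasurable_id).symm
  filter_upwards [strong_law_ae X hint hXindep hident] with ω hω
  rw [← hmean]
  exact ((tendsto_add_atTop_iff_nat 1).mpr hω).congr fun k =>
    (mbar_eq_smul_sum_range (X · ω) k).symm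

end ICL

theorem psi_mu_limit_general
    {Ω : Type*} [MeasurableSpace Ω] (P : Measure Ω)
    (d M : ℕ)
    (μc : Fin M → Fin d → ℝ)
    (σμ σx τx : ℝ) (hσμ : 0 < σμ) (hσx : 0 < σx)
    (μstar : Fin d → ℝ)
    (α β : Fin M) (hnorm : sqnorm (μc α) = sqnorm (μc β))
    (X : ℕ → Ω → Fin d → ℝ) (hXmeas : ∀ i, Measurable (X i))
    (hXindep : ProbabilityTheory.iIndepFun X P)
    (hXdist : ∀ i, Measure.map (X i) P = gaussianVec d μstar ⟨τx ^ 2, sq_nonneg τx⟩) :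
    ∀ᵐ ω ∂P,
      Filter.Tendsto
        (fun k : ℕ =>
          Real.log (cMu σμ σx (μc α) k (fun i : Fin (k + 1) => X i ω) /
            cMu σμ σx (μc β) k (fun i : Fin (k + 1) => X i ω)))
        Filter.atTop
        (nhds ((sqnorm (μc β - μstar) - sqnorm (μc α - μstar)) / (2 * σμ ^ 2))) := by
  have hδ : 0 < σμ ^ 2 / σx ^ 2 := by positivity
  set v : ℝ≥0 := ⟨τx ^ 2, sq_nonneg τx⟩
  have hSLLN := ae_tendsto_mbar X (fun i => (hXmeas i).aemeasurable)
    (fun i j hij => hXindep.indepFun hij) hXdist (integrable_id_gaussianVec d μstar v)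
  filter_upwards [hSLLN] with ω hmbar
  rw [integral_id_gaussianVec] at hmbar
  have hdot : Tendsto (fun k => (μc α - μc β) ⬝ᵥ mbar k (fun i : Fin (k + 1) => X i ω)) atTop
      (𝓝 ((μc α - μc β) ⬝ᵥ μstar)) :=
    ((continuous_const.dotProduct continuous_id).tendsto μstar).comp hmbar
  have hlim := ((tendsto_mul_div_one_add_mul hδ.ne').mul hdot).div_const (σμ ^ 2)
  rw [one_mul] at hlim
  rw [sqnorm_sub_sub_sqnorm_sub_of_sqnorm_eq hnorm, mul_div_mul_left _ _ two_ne_zero]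
  refine hlim.congr fun k => ?_
  exact (log_cMu_div_cMu σx hσμ.ne' hnorm k _ (by positivity)).symm

/-- Almost-sure limit of the μ-part of the re-weighting
ratio: a.s. `Ψ^{(k)}_μ(α,β) → (‖μ_β − μ*‖² − ‖μ_α − μ*‖²)/(2σ_μ²)`. -/
theorem psi_mu_limit
    {Ω : Type*} [MeasurableSpace Ω] (P : Measure Ω) [IsProbabilityMeasure P]
    (d M : ℕ) (hd : 0 < d) (hM : 0 < M)
    (μc : Fin M → Fin d → ℝ)
    (σμ σx τx : ℝ) (hσμ : 0 < σμ) (hσx : 0 < σx) (hτx : 0 < τx)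
    (μstar : Fin d → ℝ)
    (α β : Fin M) (hnorm : sqnorm (μc α) = sqnorm (μc β))
    (X : ℕ → Ω → Fin d → ℝ) (hXmeas : ∀ i, Measurable (X i))
    (hXindep : ProbabilityTheory.iIndepFun X P)
    (hXdist : ∀ i, Measure.map (X i) P = gaussianVec d μstar ⟨τx ^ 2, sq_nonneg τx⟩) :
    ∀ᵐ ω ∂P,
      Filter.Tendsto
        (fun k : ℕ =>
          Real.log (cMu σμ σx (μc α) k (fun i : Fin (k + 1) => X i ω) /
            cMu σμ σx (μc β) k (fun i : Fin (k + 1) => X i ω)))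
        Filter.atTop
        (nhds ((sqnorm (μc β - μstar) - sqnorm (μc α - μstar)) / (2 * σμ ^ 2))) :=
  psi_mu_limit_general P d M μc σμ σx τx hσμ hσx μstar α β hnorm X hXmeas hXindep hXdist
end
end

section
/- (Small-prior-noise limit of the re-weighting exponent.) Let α, β ∈ {1,…,M} with ‖μ_α‖ = ‖μ_β‖, fix data x_1,…,x_{k+1} ∈ ℝ^d and labels y_i = ⟨x_i, w*⟩ (i = 1,…,k) for some w* ∈ ℝ^d, and hold σ_x, σ_y > 0 fixed. Regarding Ψ_μ(α,β) + Ψ_w(α,β) as a function of (σ_μ, σ_w) ∈ (0,∞)², one has lim_{(σ_μ,σ_w)→(0⁺,0⁺)} (Ψ_μ(α,β) + Ψ_w(α,β)) = (‖μ_β − x_{k+1}‖² − ‖μ_α − x_{k+1}‖²)/(2σ_x²) + Σ_{i=1}^k [ (‖μ_β − x_i‖² − ‖μ_α − x_i‖²)/(2σ_x²) + ((⟨x_i, w_β⟩ − ⟨x_i, w*⟩)² − (⟨x_i, w_α⟩ − ⟨x_i, w*⟩)²)/(2σ_y²) ]. -/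
open MeasureTheory ProbabilityTheory Matrix Filter Topology
open scoped NNReal ENNReal

noncomputable section

open ICL

/-!
Both re-weighting exponents have the form `-Q(δ) / (2σ²)`, where `δ` is a prior-to-noise
variance ratio and `Q(δ) = (‖w‖² - ‖w + δu‖²_{(I + δS)⁻¹}) / δ` (`quadGap S u w δ`): for `c^μ`
take `S = (k+1) I`, `u = Σᵢ xᵢ`, and for `c^w` take `S = Σᵢ xᵢxᵢᵀ`, `u = Σᵢ yᵢxᵢ`. The identity
`(I + δS)⁻¹ = I - δ S (I + δS)⁻¹` cancels the `1/δ`, so `Q` extends continuously to `δ = 0`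
with value `wᵀSw - 2⟨w, u⟩`, which for both choices is a sum of squared residuals minus a
term independent of `w`. The two exponents depend on different variables, so their limits
can be taken separately.
-/

namespace ICL

theorem tendsto_sq_div_sq_nhdsGT_nhdsNE {σ : ℝ} (hσ : σ ≠ 0) :
    Tendsto (fun p : ℝ => p ^ 2 / σ ^ 2) (𝓝[>] 0) (𝓝[≠] 0) := by
  refine tendsto_nhdsWithin_of_tendsto_nhds_of_eventually_within _ ?_ ?_
  · have hcont : Continuous fun p : ℝ => p ^ 2 / σ ^ 2 := by fun_prop
    exact (hcont.tendsto' 0 0 (by simp)).mono_left nhdsWithin_le_nhds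
  · filter_upwards [self_mem_nhdsWithin] with p hp
    exact div_ne_zero (pow_ne_zero 2 (ne_of_gt hp)) (pow_ne_zero 2 hσ)

section QuadGap

variable {n : Type*} [Fintype n] [DecidableEq n]

theorem inv_one_add_smul_eq {R : Type*} [CommRing R] (S : Matrix n n R) (c : R)
    (h : IsUnit (1 + c • S).det) : (1 + c • S)⁻¹ = 1 - c • (S * (1 + c • S)⁻¹) := by
  have hmul := mul_nonsing_inv _ h
  rw [add_mul, one_mul, smul_mul_assoc] at hmul
  exact eq_sub_of_add_eq hmul

theorem dotProduct_inv_one_add_smul_mulVec {R : Type*} [CommRing R] (S : Matrix n n R) (c : R)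
    (h : IsUnit (1 + c • S).det) (v : n → R) :
    v ⬝ᵥ (1 + c • S)⁻¹ *ᵥ v = v ⬝ᵥ v - c * (v ⬝ᵥ S *ᵥ (1 + c • S)⁻¹ *ᵥ v) := by
  nth_rewrite 1 [inv_one_add_smul_eq S c h]
  rw [sub_mulVec, one_mulVec, smul_mulVec, ← mulVec_mulVec, dotProduct_sub, dotProduct_smul,
    smul_eq_mul]

def quadGap (S : Matrix n n ℝ) (u w : n → ℝ) (c : ℝ) : ℝ :=
  (w ⬝ᵥ w - (w + c • u) ⬝ᵥ (1 + c • S)⁻¹ *ᵥ (w + c • u)) / c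

theorem quadGap_eq (S : Matrix n n ℝ) (u w : n → ℝ) {c : ℝ} (hc : c ≠ 0)
    (h : IsUnit (1 + c • S).det) :
    quadGap S u w c =
      (w + c • u) ⬝ᵥ S *ᵥ (1 + c • S)⁻¹ *ᵥ (w + c • u) - 2 * (w ⬝ᵥ u) - c * (u ⬝ᵥ u) := by
  have hsq : (w + c • u) ⬝ᵥ (w + c • u) = w ⬝ᵥ w + 2 * c * (w ⬝ᵥ u) + c ^ 2 * (u ⬝ᵥ u) := by
    simp only [add_dotProduct, dotProduct_add, smul_dotProduct, dotProduct_smul, smul_eq_mul,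
      dotProduct_comm u w]
    ring
  rw [quadGap, dotProduct_inv_one_add_smul_mulVec S c h, hsq]
  field_simp
  ring

theorem tendsto_quadGap (S : Matrix n n ℝ) (u w : n → ℝ) :
    Tendsto (quadGap S u w) (𝓝[≠] 0) (𝓝 (w ⬝ᵥ S *ᵥ w - 2 * (w ⬝ᵥ u))) := by
  have hdet : ∀ᶠ c in 𝓝 (0 : ℝ), IsUnit (1 + c • S).det := by
    have hcont : ContinuousAt (fun c : ℝ => (1 + c • S).det) 0 := by fun_prop
    exact (hcont.eventually_ne (by simp)).mono fun c hc => hc.isUnit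
  have hinv : ContinuousAt (fun c : ℝ => (1 + c • S)⁻¹) 0 := by
    refine ContinuousAt.comp (g := Inv.inv) (continuousAt_matrix_inv _ ?_) (by fun_prop)
    rw [zero_smul, add_zero, det_one, Ring.inverse_eq_inv']
    exact continuousAt_inv₀ one_ne_zero
  have hg : ContinuousAt (fun c : ℝ =>
      (w + c • u) ⬝ᵥ S *ᵥ (1 + c • S)⁻¹ *ᵥ (w + c • u) - 2 * (w ⬝ᵥ u) - c * (u ⬝ᵥ u)) 0 := by
    have hquad : Continuous fun q : (n → ℝ) × Matrix n n ℝ => q.1 ⬝ᵥ S *ᵥ q.2 *ᵥ q.1 :=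
      continuous_fst.dotProduct
        (continuous_const.matrix_mulVec (continuous_snd.matrix_mulVec continuous_fst))
    have hv : Continuous fun c : ℝ => w + c • u := by fun_prop
    exact ((hquad.continuousAt.comp (hv.continuousAt.prodMk hinv)).sub continuousAt_const).sub
      (by fun_prop)
  have hlim := hg.tendsto.mono_left (nhdsWithin_le_nhds (s := {0}ᶜ))
  simp only [zero_smul, add_zero, inv_one, one_mulVec, zero_mul, sub_zero] at hlim
  refine hlim.congr' ?_
  filter_upwards [self_mem_nhdsWithin, nhdsWithin_le_nhds hdet] with c hc hdetc
  exact (quadGap_eq S u w hc hdetc).symm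

theorem tendsto_log_exp_quadGap_div_exp_quadGap (S : Matrix n n ℝ) (u w w' : n → ℝ) {σ : ℝ}
    (hσ : σ ≠ 0) :
    Tendsto (fun p : ℝ => Real.log (Real.exp (-quadGap S u w (p ^ 2 / σ ^ 2) / (2 * σ ^ 2)) /
        Real.exp (-quadGap S u w' (p ^ 2 / σ ^ 2) / (2 * σ ^ 2)))) (𝓝[>] 0)
      (𝓝 ((w' ⬝ᵥ S *ᵥ w' - 2 * (w' ⬝ᵥ u) - (w ⬝ᵥ S *ᵥ w - 2 * (w ⬝ᵥ u))) / (2 * σ ^ 2))) := by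
  simp only [← Real.exp_sub, Real.log_exp, neg_div, neg_sub_neg, ← sub_div]
  exact (((tendsto_quadGap S u w').sub (tendsto_quadGap S u w)).comp
    (tendsto_sq_div_sq_nhdsGT_nhdsNE hσ)).div_const _

end QuadGap

theorem natCast_smul_barSigma {d k : ℕ} (xs : Fin (k + 1) → Fin d → ℝ) :
    (k : ℝ) • barSigma k xs = ∑ i : Fin k, vecMulVec (xs i.castSucc) (xs i.castSucc) := by
  obtain rfl | hk := eq_or_ne k 0
  · simp
  · rw [barSigma, smul_inv_smul₀ (Nat.cast_ne_zero.mpr hk)]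

theorem natCast_smul_wbar {d k : ℕ} (xs : Fin (k + 1) → Fin d → ℝ) (ys : Fin k → ℝ) :
    (k : ℝ) • wbar k xs ys = ∑ i : Fin k, ys i • xs i.castSucc := by
  obtain rfl | hk := eq_or_ne k 0
  · simp
  · rw [wbar, smul_inv_smul₀ (Nat.cast_ne_zero.mpr hk)]

theorem natCast_add_one_smul_mbar {d k : ℕ} (xs : Fin (k + 1) → Fin d → ℝ) :
    ((k : ℝ) + 1) • mbar k xs = ∑ i, xs i := by
  rw [mbar, smul_inv_smul₀ (by positivity)]

theorem cMu_eq_exp_quadGap {d k : ℕ} {a σx : ℝ} (hσx : σx ≠ 0) (μ : Fin d → ℝ)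
    (xs : Fin (k + 1) → Fin d → ℝ) :
    cMu a σx μ k xs = Real.exp
      (-quadGap (((k : ℝ) + 1) • 1) (∑ i, xs i) μ (a ^ 2 / σx ^ 2) / (2 * σx ^ 2)) := by
  rw [cMu, quadGap]
  set e := a ^ 2 / σx ^ 2 with he
  have hr : 1 + ((k : ℝ) + 1) * e ≠ 0 := by positivity
  have hB : (1 + e • (((k : ℝ) + 1) • 1) : Matrix (Fin d) (Fin d) ℝ) =
      (1 + ((k : ℝ) + 1) * e) • 1 := by
    rw [smul_smul, add_smul, one_smul, mul_comm]
  have hinv : (1 + e • (((k : ℝ) + 1) • 1) : Matrix (Fin d) (Fin d) ℝ)⁻¹ =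
      (1 + ((k : ℝ) + 1) * e)⁻¹ • 1 := by
    rw [hB]
    exact inv_eq_left_inv (by rw [smul_mul_smul, one_mul, inv_mul_cancel₀ hr, one_smul])
  have hshift : (((k : ℝ) + 1) * e) • mbar k xs = e • ∑ i, xs i := by
    rw [mul_comm, mul_smul, natCast_add_one_smul_mbar]
  rw [hinv, smul_mulVec, one_mulVec, dotProduct_smul, smul_eq_mul, hshift, sqnorm, sqnorm, he]
  field_simp

theorem cW_eq_exp_quadGap {d k : ℕ} {b σy : ℝ} (hσy : σy ≠ 0) (w : Fin d → ℝ)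
    (xs : Fin (k + 1) → Fin d → ℝ) (ys : Fin k → ℝ) :
    cW b σy w k xs ys = Real.exp
      (-quadGap (∑ i : Fin k, vecMulVec (xs i.castSucc) (xs i.castSucc))
        (∑ i : Fin k, ys i • xs i.castSucc) w (b ^ 2 / σy ^ 2) / (2 * σy ^ 2)) := by
  rw [cW, Bw, quadGap, mul_comm, mul_smul, mul_smul, natCast_smul_barSigma, natCast_smul_wbar,
    sqnorm]
  field_simp

theorem tendsto_log_cMu_div_cMu {d k : ℕ} {σx : ℝ} (hσx : σx ≠ 0) (μ μ' : Fin d → ℝ)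
    (xs : Fin (k + 1) → Fin d → ℝ) :
    Tendsto (fun a => Real.log (cMu a σx μ k xs / cMu a σx μ' k xs)) (𝓝[>] 0)
      (𝓝 (∑ i, (sqnorm (μ' - xs i) - sqnorm (μ - xs i)) / (2 * σx ^ 2))) := by
  simp only [cMu_eq_exp_quadGap hσx]
  convert tendsto_log_exp_quadGap_div_exp_quadGap _ _ μ μ' hσx using 2
  rw [← Finset.sum_div]
  congr 1
  simp only [sqnorm, smul_mulVec, one_mulVec, dotProduct_smul, dotProduct_sum, smul_eq_mul,
    sub_dotProduct, dotProduct_sub, Finset.sum_sub_distrib, Finset.sum_const, Finset.card_univ,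
    Fintype.card_fin, nsmul_eq_mul, dotProduct_comm (xs _) μ, dotProduct_comm (xs _) μ']
  push_cast
  ring

theorem tendsto_log_cW_div_cW {d k : ℕ} {σy : ℝ} (hσy : σy ≠ 0) (w w' : Fin d → ℝ)
    (xs : Fin (k + 1) → Fin d → ℝ) (ys : Fin k → ℝ) :
    Tendsto (fun b => Real.log (cW b σy w k xs ys / cW b σy w' k xs ys)) (𝓝[>] 0)
      (𝓝 (∑ i : Fin k, ((xs i.castSucc ⬝ᵥ w' - ys i) ^ 2 - (xs i.castSucc ⬝ᵥ w - ys i) ^ 2) /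
        (2 * σy ^ 2))) := by
  simp only [cW_eq_exp_quadGap hσy]
  convert tendsto_log_exp_quadGap_div_exp_quadGap _ _ w w' hσy using 2
  rw [← Finset.sum_div]
  congr 1
  simp only [sum_mulVec, vecMulVec_mulVec, op_smul_eq_smul, dotProduct_sum, dotProduct_smul,
    smul_eq_mul, Finset.mul_sum, ← Finset.sum_sub_distrib]
  refine Finset.sum_congr rfl fun i _ => ?_
  rw [dotProduct_comm w, dotProduct_comm w']
  ring

end ICL

theorem small_noise_limit_of_reweighting_exponent_general
    (d M k : ℕ)
    (μc wc : Fin M → Fin d → ℝ)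
    (σx σy : ℝ) (hσx : 0 < σx) (hσy : 0 < σy)
    (xs : Fin (k + 1) → Fin d → ℝ) (ys : Fin k → ℝ) (wstar : Fin d → ℝ)
    (hys : ∀ i : Fin k, ys i = dotProduct (xs i.castSucc) wstar)
    (α β : Fin M) :
    Filter.Tendsto
      (fun p : ℝ × ℝ =>
        Real.log (cMu p.1 σx (μc α) k xs / cMu p.1 σx (μc β) k xs) +
          Real.log (cW p.2 σy (wc α) k xs ys / cW p.2 σy (wc β) k xs ys))
      (nhdsWithin (0, 0) (Set.Ioi (0 : ℝ) ×ˢ Set.Ioi (0 : ℝ)))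
      (nhds
        ((sqnorm (μc β - xs (Fin.last k)) - sqnorm (μc α - xs (Fin.last k))) /
            (2 * σx ^ 2) +
          ∑ i : Fin k,
            ((sqnorm (μc β - xs i.castSucc) - sqnorm (μc α - xs i.castSucc)) /
                (2 * σx ^ 2) +
              ((dotProduct (xs i.castSucc) (wc β) -
                    dotProduct (xs i.castSucc) wstar) ^ 2 -
                (dotProduct (xs i.castSucc) (wc α) -
                    dotProduct (xs i.castSucc) wstar) ^ 2) / (2 * σy ^ 2)))) := by
  rw [nhdsWithin_prod_eq]
  have hμ := tendsto_log_cMu_div_cMu hσx.ne' (μc α) (μc β) xs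
  have hw := tendsto_log_cW_div_cW hσy.ne' (wc α) (wc β) xs ys
  refine ((hμ.comp tendsto_fst).add (hw.comp tendsto_snd)).mono_right
    (le_of_eq (congrArg 𝓝 ?_))
  rw [Fin.sum_univ_castSucc, Finset.sum_add_distrib]
  simp only [hys]
  ring

/-- Small-prior-noise limit of the re-weighting exponent:
with fixed data and noiseless linear labels, as `(σ_μ, σ_w) → (0⁺, 0⁺)` the sum
`Ψ_μ(α,β) + Ψ_w(α,β)` converges to the stated data-dependent limit. -/
theorem small_noise_limit_of_reweighting_exponent
    (d M k : ℕ) (hd : 0 < d) (hM : 0 < M)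
    (μc wc : Fin M → Fin d → ℝ)
    (σx σy : ℝ) (hσx : 0 < σx) (hσy : 0 < σy)
    (xs : Fin (k + 1) → Fin d → ℝ) (ys : Fin k → ℝ) (wstar : Fin d → ℝ)
    (hys : ∀ i : Fin k, ys i = dotProduct (xs i.castSucc) wstar)
    (α β : Fin M) (hnorm : sqnorm (μc α) = sqnorm (μc β)) :
    Filter.Tendsto
      (fun p : ℝ × ℝ =>
        Real.log (cMu p.1 σx (μc α) k xs / cMu p.1 σx (μc β) k xs) +
          Real.log (cW p.2 σy (wc α) k xs ys / cW p.2 σy (wc β) k xs ys))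
      (nhdsWithin (0, 0) (Set.Ioi (0 : ℝ) ×ˢ Set.Ioi (0 : ℝ)))
      (nhds
        ((sqnorm (μc β - xs (Fin.last k)) - sqnorm (μc α - xs (Fin.last k))) /
            (2 * σx ^ 2) +
          ∑ i : Fin k,
            ((sqnorm (μc β - xs i.castSucc) - sqnorm (μc α - xs i.castSucc)) /
                (2 * σx ^ 2) +
              ((dotProduct (xs i.castSucc) (wc β) -
                    dotProduct (xs i.castSucc) wstar) ^ 2 -
                (dotProduct (xs i.castSucc) (wc α) -
                    dotProduct (xs i.castSucc) wstar) ^ 2) / (2 * σy ^ 2)))) :=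
  small_noise_limit_of_reweighting_exponent_general d M k μc wc σx σy hσx hσy xs ys wstar hys α β
end
end
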